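/- There exists a constant C, depending only on the polynomials W_{i,v} (1 ≤ i ≤ K, 1 ≤ v ≤ k), such that for every k-admissible positive integer q and every positive integer n with gcd(f(n), q) = 1, the k-free part of n is at most C. -/

import Mathlib

open Polynomial
open scoped Classical

noncomputable section

/-- `f : ℕ → ℤ` is a multiplicative arithmetic function. -/
def IsMultFn (f : ℕ → ℤ) : Prop :=
  f 1 = 1 ∧ ∀ m n : ℕ, Nat.Coprime m n → f (m * n) = f m * f n

/-- The polynomials `F i` are multiplicatively independent over `ℤ`:
no nonzero integer tuple `c` makes `∏ i, (F i) ^ (c i)` identically constant in `ℚ(T)`. -/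
def MultIndep {m : ℕ} (F : Fin m → Polynomial ℤ) : Prop :=
  ¬ ∃ c : Fin m → ℤ, c ≠ 0 ∧ ∃ r : ℚ,
      (∏ i, (algebraMap (Polynomial ℚ) (RatFunc ℚ) ((F i).map (Int.castRingHom ℚ))) ^ (c i))
        = algebraMap ℚ (RatFunc ℚ) r

/-- `β` is the last invariant factor of the exponent matrix of the family `F`
(for some factorization of the `F i` into pairwise non-associated primitive irreducibles,
via a Smith normal form of the exponent matrix). -/
def IsLastInvFactor {m : ℕ} (F : Fin m → Polynomial ℤ) (β : ℤ) : Prop :=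
  ∃ (M : ℕ) (G : Fin M → Polynomial ℤ) (c : Fin m → ℤ) (μ : Fin M → Fin m → ℕ),
    (∀ j, Irreducible (G j)) ∧
    (∀ j, (G j).IsPrimitive) ∧
    (∀ j j', j ≠ j' → ¬ Associated (G j) (G j')) ∧
    (∀ i, F i = Polynomial.C (c i) * ∏ j, G j ^ μ j i) ∧
    (∀ j, ∃ i, 0 < μ j i) ∧
    ∃ (P : Matrix (Fin M) (Fin M) ℤ) (Q : Matrix (Fin m) (Fin m) ℤ),
      IsUnit P.det ∧ IsUnit Q.det ∧
      (∀ (s : Fin M) (t : Fin m), (s : ℕ) ≠ (t : ℕ) →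
        (P * (Matrix.of fun u v => (μ u v : ℤ)) * Q) s t = 0) ∧
      (∀ (s s' : Fin M) (t t' : Fin m), (s : ℕ) = (t : ℕ) → (s' : ℕ) = (t' : ℕ) →
        (s : ℕ) + 1 = (s' : ℕ) →
        (P * (Matrix.of fun u v => (μ u v : ℤ)) * Q) s t ∣
          (P * (Matrix.of fun u v => (μ u v : ℤ)) * Q) s' t') ∧
      (∀ (s : Fin M) (t : Fin m), (s : ℕ) = (t : ℕ) → (s : ℕ) + 1 = min M m →
        β = (P * (Matrix.of fun u v => (μ u v : ℤ)) * Q) s t)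

/-- Invariant Factor Hypothesis `IFH(F; B₀)` for the modulus `q`. -/
def IFH {m : ℕ} (F : Fin m → Polynomial ℤ) (B₀ : ℝ) (q : ℕ) : Prop :=
  ∀ β : ℤ, IsLastInvFactor F β →
    ∀ ℓ : ℕ, ℓ.Prime → ℓ ∣ q → B₀ < (ℓ : ℝ) → Int.gcd ((ℓ : ℤ) - 1) β = 1

/-- `alphaRatio q P`: the proportion of units `u` mod `q` with `P(u)` a unit mod `q`. -/
def alphaRatio (q : ℕ) (P : Polynomial ℤ) : ℝ :=
  (Nat.card {u : (ZMod q)ˣ // IsUnit (Polynomial.aeval ((u : ZMod q)) P)} : ℝ)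
    / (Nat.totient q : ℝ)

/-- `q` is `k`-admissible with respect to the family of products `Wprod v`. -/
def KAdmissible (Wprod : ℕ → Polynomial ℤ) (k q : ℕ) : Prop :=
  (∃ u : (ZMod q)ˣ, IsUnit (Polynomial.aeval ((u : ZMod q)) (Wprod k))) ∧
  ∀ v, 1 ≤ v → v < k → ¬ ∃ u : (ZMod q)ˣ, IsUnit (Polynomial.aeval ((u : ZMod q)) (Wprod v))

/-- Narkiewicz's set `Q(k; f_1, …, f_K)`. -/
def NarkSet {K : ℕ} (k : ℕ) (f : Fin K → ℕ → ℤ) (W : Fin K → ℕ → Polynomial ℤ) : Set ℕ :=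
  {q | KAdmissible (fun v => ∏ i, W i v) k q ∧
    ∀ χ : Fin K → DirichletCharacter ℂ q, χ ≠ (fun _ => 1) →
      (∀ u : (ZMod q)ˣ, IsUnit (Polynomial.aeval ((u : ZMod q)) (∏ i, W i k)) →
          (∏ i, (χ i) (Polynomial.aeval ((u : ZMod q)) (W i k))) = 1) →
      ∃ p : ℕ, p.Prime ∧
        (∑' j : ℕ, (∏ i, (χ i) ((f i (p ^ j) : ZMod q))) *
            ((((p : ℝ) ^ (-(j : ℝ) / (k : ℝ))) : ℝ) : ℂ)) = 0}

/-- `Pj j n`: the `j`-th largest prime factor of `n` counted with multiplicity,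
equal to `1` if `Ω(n) < j`. -/
def Pj (j n : ℕ) : ℕ := (n.primeFactorsList.reverse).getD (j - 1) 1

/-- `nPart k n` is `n_k`, the largest positive integer whose `k`-th power is a
unitary divisor of `n`. -/
def nPart (k n : ℕ) : ℕ :=
  ∏ p ∈ n.primeFactors, if k ∣ n.factorization p then p ^ (n.factorization p / k) else 1

/-- A polynomial is squarefull in `ℤ[T]` iff every complex root has multiplicity at least 2. -/
def SquarefullPoly (F : Polynomial ℤ) : Prop :=
  ∀ z : ℂ, (F.map (Int.castRingHom ℂ)).IsRoot z →
    2 ≤ (F.map (Int.castRingHom ℂ)).rootMultiplicity z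

/-- `n` is convenient (with respect to exponent `k`, threshold `y` and length `J`). -/
def Convenient (k : ℕ) (y : ℝ) (J : ℕ) (n : ℕ) : Prop :=
  ∃ (m : ℕ) (P : Fin J → ℕ), 0 < m ∧ (∀ t, (P t).Prime) ∧
    (∀ s t : Fin J, s < t → P t < P s) ∧
    (∀ t, y < (P t : ℝ) ∧ Pj 1 m < P t) ∧
    n = m * (∏ t, P t) ^ k

/-- The solution count `Ṽ_{N,K}(q; (w_i))`. -/
def VNK {K N : ℕ} (F : Fin K → Fin N → Polynomial ℤ) (q : ℕ) (w : Fin K → ZMod q) : ℕ :=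
  Nat.card {v : Fin N → (ZMod q)ˣ //
    ∀ i, (∏ j, Polynomial.aeval ((v j : ZMod q)) (F i j)) = w i}

/-- `α*_N(q) = ∏_j α̃_j(q)`. -/
def alphaStarN {K N : ℕ} (F : Fin K → Fin N → Polynomial ℤ) (q : ℕ) : ℝ :=
  ∏ j, alphaRatio q (∏ i, F i j)

/-- `n` is `r`-full: every prime dividing `n` divides it to the `r`-th power. -/
def IsRFull (r n : ℕ) : Prop := ∀ p : ℕ, p.Prime → p ∣ n → p ^ r ∣ n

/-- The `k`-free part of `n`. -/
def kfreePart (k n : ℕ) : ℕ :=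
  ∏ p ∈ n.primeFactors, if n.factorization p < k then p ^ n.factorization p else 1

/-! If `p` divides `n` exactly to a power `v < k`, then `W_v(p) = f(p^v)` divides `f(n)`, so
`W_v(p)` is prime to `q`. For a prime `p > deg W_v + 1` this already gives `R_v(q) ≠ ∅`,
contradicting admissibility. By the Chinese remainder theorem it suffices to find a unit with a
unit value modulo `p^a ∥ q` and modulo the prime-to-`p` part `q'` of `q`: modulo `q'` take `p`
itself; modulo `p` take a nonzero non-root of `W_v`, which exists because
`W_v(0) ≡ W_v(p) ≢ 0 (mod p)` and `deg W_v < p - 1`. So every prime in the `k`-free part of `n`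
is bounded in terms of the degrees of the `W_v`, `v < k`, and occurs to an exponent `< k`. -/

open scoped Nat

namespace Polynomial

/-- The paper's condition `R_v(q) ≠ ∅` is `(W_v).HasUnitAtUnit (ZMod q)`. -/
def HasUnitAtUnit (P : ℤ[X]) (R : Type*) [CommRing R] : Prop :=
  ∃ x : R, IsUnit x ∧ IsUnit (aeval x P)

variable {P : ℤ[X]}

section

variable {R S : Type*} [CommRing R] [CommRing S]

theorem aeval_ringHom_apply (f : R →+* S) (x : R) : aeval (f x) P = f (aeval x P) :=
  aeval_algHom_apply f.toIntAlgHom x P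

theorem HasUnitAtUnit.map (h : P.HasUnitAtUnit R) (f : R →+* S) : P.HasUnitAtUnit S := by
  obtain ⟨x, hx, hPx⟩ := h
  exact ⟨f x, hx.map f, aeval_ringHom_apply f x ▸ hPx.map f⟩

theorem HasUnitAtUnit.prod (hR : P.HasUnitAtUnit R) (hS : P.HasUnitAtUnit S) :
    P.HasUnitAtUnit (R × S) := by
  obtain ⟨x, hx, hPx⟩ := hR
  obtain ⟨y, hy, hPy⟩ := hS
  refine ⟨(x, y), Prod.isUnit_iff.2 ⟨hx, hy⟩, Prod.isUnit_iff.2 ⟨?_, ?_⟩⟩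
  · exact (congrArg IsUnit (aeval_ringHom_apply (RingHom.fst R S) (x, y))).mp hPx
  · exact (congrArg IsUnit (aeval_ringHom_apply (RingHom.snd R S) (x, y))).mp hPy

end

theorem hasUnitAtUnit_zmod_iff {m : ℕ} :
    P.HasUnitAtUnit (ZMod m) ↔ ∃ c : ℤ, IsCoprime (m : ℤ) c ∧ IsCoprime (m : ℤ) (P.eval c) := by
  have aeval_cast (c : ℤ) : aeval (c : ZMod m) P = ((P.eval c : ℤ) : ZMod m) := by
    simp [aeval_def, eval₂_at_intCast]
  simp only [HasUnitAtUnit, ZMod.intCast_surjective.exists, aeval_cast,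
    ZMod.coe_int_isUnit_iff_isCoprime]

theorem HasUnitAtUnit.zmod_mul {m n : ℕ} (hmn : m.Coprime n) (hm : P.HasUnitAtUnit (ZMod m))
    (hn : P.HasUnitAtUnit (ZMod n)) : P.HasUnitAtUnit (ZMod (m * n)) :=
  (hm.prod hn).map (ZMod.chineseRemainder hmn).symm.toRingHom

theorem HasUnitAtUnit.zmod_pow {m : ℕ} (h : P.HasUnitAtUnit (ZMod m)) (a : ℕ) :
    P.HasUnitAtUnit (ZMod (m ^ a)) := by
  obtain ⟨c, hc, hPc⟩ := hasUnitAtUnit_zmod_iff.1 h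
  refine hasUnitAtUnit_zmod_iff.2 ⟨c, ?_, ?_⟩ <;> push_cast
  exacts [hc.pow_left, hPc.pow_left]

theorem hasUnitAtUnit_of_natDegree_lt_card {F : Type*} [Field F] [Fintype F]
    (hP : P.map (algebraMap ℤ F) ≠ 0) (hdeg : P.natDegree + 1 < Fintype.card F) :
    P.HasUnitAtUnit F := by
  -- a non-root of `X * P` is a nonzero non-root of `P`
  have hXP : X * P.map (algebraMap ℤ F) ≠ 0 := mul_ne_zero X_ne_zero hP
  have hdegXP : (X * P.map (algebraMap ℤ F)).natDegree < Cardinal.mk F := by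
    rw [Cardinal.mk_fintype, natDegree_X_mul hP]
    exact_mod_cast (Nat.add_le_add_right (natDegree_map_le ..) 1).trans_lt hdeg
  obtain ⟨x, hx⟩ := exists_eval_ne_zero_of_natDegree_lt_card _ hXP hdegXP
  rw [eval_mul, eval_X, eval_map_algebraMap] at hx
  exact ⟨x, isUnit_iff_ne_zero.2 (left_ne_zero_of_mul hx),
    isUnit_iff_ne_zero.2 (right_ne_zero_of_mul hx)⟩

theorem hasUnitAtUnit_zmod_prime_pow {p : ℕ} (hp : p.Prime) (hdeg : P.natDegree + 1 < p)
    (a : ℕ) (hcop : IsCoprime (P.eval (p : ℤ)) ((p ^ a : ℕ) : ℤ)) :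
    P.HasUnitAtUnit (ZMod (p ^ a)) := by
  rcases Nat.eq_zero_or_pos a with rfl | ha
  · rw [pow_zero]
    exact ⟨0, isUnit_of_subsingleton _, isUnit_of_subsingleton _⟩
  have := Fact.mk hp
  refine HasUnitAtUnit.zmod_pow (hasUnitAtUnit_of_natDegree_lt_card ?_ (by rwa [ZMod.card])) a
  intro h0
  have hdvd : (p : ℤ) ∣ P.eval (p : ℤ) := by
    have hP0 := eval_intCast_map (algebraMap ℤ (ZMod p)) P p
    rw [h0, eval_zero, algebraMap_int_eq, eq_intCast] at hP0
    exact (ZMod.intCast_zmod_eq_zero_iff_dvd _ _).1 hP0.symm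
  exact (Nat.prime_iff_prime_int.1 hp).not_isUnit <| hcop.isUnit_of_dvd' hdvd
    (by push_cast; exact dvd_pow_self _ ha.ne')

theorem hasUnitAtUnit_zmod_of_isCoprime_eval {p q : ℕ} (hp : p.Prime) (hq : q ≠ 0)
    (hdeg : P.natDegree + 1 < p) (hcop : IsCoprime (P.eval (p : ℤ)) q) :
    P.HasUnitAtUnit (ZMod q) := by
  have hcoprime : Nat.Coprime (p ^ q.factorization p) (ordCompl[p] q) :=
    (Nat.coprime_ordCompl hp hq).pow_left _
  have hcop_dvd {d : ℕ} (hd : d ∣ q) : IsCoprime (P.eval (p : ℤ)) d :=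
    hcop.of_isCoprime_of_dvd_right (Int.natCast_dvd_natCast.2 hd)
  rw [← Nat.ordProj_mul_ordCompl_eq_self q p]
  refine .zmod_mul hcoprime
    (hasUnitAtUnit_zmod_prime_pow hp hdeg _ (hcop_dvd (Nat.ordProj_dvd q p))) ?_
  exact hasUnitAtUnit_zmod_iff.2
    ⟨p, Nat.isCoprime_iff_coprime.2 (Nat.coprime_ordCompl hp hq).symm,
      (hcop_dvd (Nat.ordCompl_dvd q p)).symm⟩

end Polynomial

theorem IsMultFn.apply_ordProj_dvd {f : ℕ → ℤ} (hf : IsMultFn f) {n p : ℕ} (hp : p.Prime)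
    (hn : n ≠ 0) : f (p ^ n.factorization p) ∣ f n := by
  conv_rhs => rw [← Nat.ordProj_mul_ordCompl_eq_self n p]
  rw [hf.2 _ _ ((Nat.coprime_ordCompl hp hn).pow_left _)]
  exact dvd_mul_right _ _

theorem kfreePart_le_factorial_pow {k n D : ℕ}
    (h : ∀ p ∈ n.primeFactors, n.factorization p < k → p ≤ D) : kfreePart k n ≤ D ! ^ k := by
  set S := n.primeFactors.filter fun p => n.factorization p < k
  calc kfreePart k n = ∏ p ∈ S, p ^ n.factorization p := by rw [kfreePart, Finset.prod_filter]
    _ ≤ ∏ p ∈ S, p ^ k := by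
      refine Finset.prod_le_prod' fun p hp => ?_
      obtain ⟨hpn, hlt⟩ := Finset.mem_filter.1 hp
      exact Nat.pow_le_pow_right (Nat.pos_of_mem_primeFactors hpn) hlt.le
    _ ≤ ∏ p ∈ Finset.Ico 1 (D + 1), p ^ k := by
      refine Finset.prod_le_prod_of_subset_of_one_le' (fun p hp => ?_) fun p hp _ => ?_
      · obtain ⟨hpn, hlt⟩ := Finset.mem_filter.1 hp
        exact Finset.mem_Ico.2 ⟨Nat.pos_of_mem_primeFactors hpn, Nat.lt_succ_of_le (h p hpn hlt)⟩
      · exact Nat.one_le_pow _ _ (Finset.mem_Ico.1 hp).1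
    _ = D ! ^ k := by rw [Finset.prod_pow, Finset.prod_Ico_id_eq_factorial]

theorem kfree_part_bounded_general
    (K V : ℕ)
    (f : Fin K → ℕ → ℤ) (hf : ∀ i, IsMultFn (f i))
    (W : Fin K → ℕ → Polynomial ℤ)
    (hfW : ∀ (i : Fin K) (v : ℕ), 1 ≤ v → v ≤ V → ∀ p : ℕ, p.Prime →
      f i (p ^ v) = (W i v).eval (p : ℤ))
    (k : ℕ) (hkV : k ≤ V) :
    ∃ C : ℕ, ∀ q : ℕ, 0 < q → KAdmissible (fun v => ∏ i, W i v) k q →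
      ∀ n : ℕ, 0 < n → Int.gcd (∏ i, f i n) (q : ℤ) = 1 → kfreePart k n ≤ C := by
  set D := (Finset.range k).sup fun v => (∏ i, W i v).natDegree + 1
  refine ⟨D ! ^ k, fun q hq hadm n hn hgcd => kfreePart_le_factorial_pow fun p hpn hvk => ?_⟩
  have hp := Nat.prime_of_mem_primeFactors hpn
  set v := n.factorization p
  have hv : 1 ≤ v := hp.factorization_pos_of_dvd hn.ne' (Nat.dvd_of_mem_primeFactors hpn)
  have heval : ∏ i, f i (p ^ v) = (∏ i, W i v).eval (p : ℤ) := by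
    rw [eval_prod]
    exact Finset.prod_congr rfl fun i _ => hfW i v hv (by omega) p hp
  have hcop : IsCoprime ((∏ i, W i v).eval (p : ℤ)) q :=
    heval ▸ (Int.isCoprime_iff_gcd_eq_one.2 hgcd).of_isCoprime_of_dvd_left
      (Finset.prod_dvd_prod_of_dvd _ _ fun i _ => (hf i).apply_ordProj_dvd hp hn.ne')
  by_contra! hDp
  have hdeg : (∏ i, W i v).natDegree + 1 < p :=
    (Finset.le_sup (f := fun v => (∏ i, W i v).natDegree + 1)
      (Finset.mem_range.2 hvk)).trans_lt hDp
  obtain ⟨x, hx, hPx⟩ := hasUnitAtUnit_zmod_of_isCoprime_eval hp hq.ne' hdeg hcop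
  exact hadm.2 v hv hvk ⟨hx.unit, hPx⟩

theorem kfree_part_bounded
    (K V : ℕ) (hK : 1 ≤ K) (hV : 1 ≤ V)
    (f : Fin K → ℕ → ℤ) (hf : ∀ i, IsMultFn (f i))
    (W : Fin K → ℕ → Polynomial ℤ)
    (hfW : ∀ (i : Fin K) (v : ℕ), 1 ≤ v → v ≤ V → ∀ p : ℕ, p.Prime →
      f i (p ^ v) = (W i v).eval (p : ℤ))
    (k : ℕ) (hk1 : 1 ≤ k) (hkV : k ≤ V)
    (hWnc : ∀ i, 0 < (W i k).natDegree) :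
    ∃ C : ℕ, ∀ q : ℕ, 0 < q → KAdmissible (fun v => ∏ i, W i v) k q →
      ∀ n : ℕ, 0 < n → Int.gcd (∏ i, f i n) (q : ℤ) = 1 → kfreePart k n ≤ C :=
  kfree_part_bounded_general K V f hf W hfW k hkV
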